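/- arXiv:1506.07381 — 9 statements merged into one kernel-verified Lean document; each statement's English description precedes it below -/
import Mathlib

section
/- Let g_x, g_v be real numbers and ρ_{x,j}, ρ_{v,j} (j = −2,…,2) real coefficients, and define λ_x(φ) = g_x·Σ_{j=-2}^{2} ρ_{x,j} e^{iφj} and λ_v(φ) = g_v·Σ_{j=-2}^{2} ρ_{v,j} e^{iφj} for φ ∈ ℝ. Then the set A = {ν ∈ ℂ : ∃ N ≥ 5, ∃ m ∈ ℤ, ν² − λ_v(2πm/N)·ν − λ_x(2πm/N) = 0} is dense in the set B = {ν ∈ ℂ : ∃ φ ∈ ℝ, ν² − λ_v(φ)·ν − λ_x(φ) = 0}; that is, B is contained in the closure of A. -/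
/-- The eigenvalue curve `λ(φ) = g·Σ_{j=-2}^{2} ρ_j e^{iφj}` of a circulant
next-nearest-neighbor Laplacian. -/
noncomputable def lam (g : ℝ) (ρ : ℤ → ℝ) (φ : ℝ) : ℂ :=
  (g : ℂ) * ∑ j ∈ Finset.Icc (-2 : ℤ) 2,
    (ρ j : ℂ) * Complex.exp (Complex.I * (φ : ℂ) * (j : ℂ))

lemma lam_continuous (g : ℝ) (ρ : ℤ → ℝ) : Continuous (lam g ρ) := by
  unfold lam
  fun_prop

lemma quad_root (b c b' c' ν : ℂ) (h : ν ^ 2 - b * ν - c = 0) :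
    ∃ r : ℂ, r ^ 2 - b' * r - c' = 0 ∧
      ‖ν - r‖ ^ 2 ≤ ‖(b - b') * ν + (c - c')‖ := by
  obtain ⟨s, hs⟩ := IsAlgClosed.exists_pow_nat_eq (b' ^ 2 + 4 * c') (n := 2) (by norm_num)
  have h₁ : ((b' + s) / 2) ^ 2 - b' * ((b' + s) / 2) - c' = 0 := by
    linear_combination hs / 4
  have h₂ : ((b' - s) / 2) ^ 2 - b' * ((b' - s) / 2) - c' = 0 := by
    linear_combination hs / 4
  have hprod : (ν - (b' + s) / 2) * (ν - (b' - s) / 2) = (b - b') * ν + (c - c') := by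
    linear_combination -hs / 4 + h
  have hnorm : ‖ν - (b' + s) / 2‖ * ‖ν - (b' - s) / 2‖ = ‖(b - b') * ν + (c - c')‖ := by
    rw [← norm_mul, hprod]
  rcases le_total ‖ν - (b' + s) / 2‖ ‖ν - (b' - s) / 2‖ with hle | hle
  · exact ⟨(b' + s) / 2, h₁, by nlinarith [norm_nonneg (ν - (b' + s) / 2)]⟩
  · exact ⟨(b' - s) / 2, h₂, by nlinarith [norm_nonneg (ν - (b' - s) / 2)]⟩

lemma angle_close (φ₀ δ : ℝ) (hδ : 0 < δ) :
    ∃ N : ℕ, 5 ≤ N ∧ ∃ m : ℤ, |2 * Real.pi * m / N - φ₀| < δ := by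
  have hπ := Real.pi_pos
  obtain ⟨N, hN⟩ := exists_nat_gt (max 5 (2 * Real.pi / δ))
  have hN5 : 5 ≤ N := by
    have := (le_max_left 5 (2 * Real.pi / δ)).trans_lt hN
    exact_mod_cast this.le
  have hN0 : (0 : ℝ) < N := by positivity
  have hNδ : 2 * Real.pi / N < δ := by
    have h2 := (le_max_right 5 (2 * Real.pi / δ)).trans_lt hN
    rw [div_lt_iff₀ hN0]
    rw [div_lt_iff₀ hδ] at h2
    nlinarith
  refine ⟨N, hN5, ⌊φ₀ * N / (2 * Real.pi)⌋, ?_⟩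
  set m : ℤ := ⌊φ₀ * N / (2 * Real.pi)⌋
  have h1 : (m : ℝ) ≤ φ₀ * N / (2 * Real.pi) := Int.floor_le _
  have h2 : φ₀ * N / (2 * Real.pi) < m + 1 := Int.lt_floor_add_one _
  rw [le_div_iff₀ (by positivity)] at h1
  rw [div_lt_iff₀ (by positivity)] at h2
  rw [abs_lt]
  constructor
  · rw [lt_sub_iff_add_lt, lt_div_iff₀ hN0]
    rw [div_lt_iff₀ hN0] at hNδ
    nlinarith
  · rw [sub_lt_iff_lt_add, div_lt_iff₀ hN0]
    nlinarith

/-- Lemma 3 (second part) of the paper: the eigenvalues of the collection of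
periodic systems (roots of the characteristic equation at angles `φ = 2πm/N`,
`N ≥ 5`) form a dense subset of the closed curves defined by the
characteristic equation `ν² − λ_v(φ)ν − λ_x(φ) = 0` over all `φ ∈ ℝ`. -/
theorem eigenvalues_dense_in_curves (gx gv : ℝ) (ρx ρv : ℤ → ℝ) :
    {ν : ℂ | ∃ φ : ℝ, ν ^ 2 - lam gv ρv φ * ν - lam gx ρx φ = 0} ⊆
      closure {ν : ℂ | ∃ N : ℕ, 5 ≤ N ∧ ∃ m : ℤ,
        ν ^ 2 - lam gv ρv (2 * Real.pi * m / N) * ν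
          - lam gx ρx (2 * Real.pi * m / N) = 0} := by
  rintro ν ⟨φ₀, hφ₀⟩
  rw [Metric.mem_closure_iff]
  intro ε hε
  set E : ℝ := ε ^ 2 / (2 * (‖ν‖ + 1)) with hE
  have hE0 : 0 < E := by positivity
  -- continuity of both lam curves at φ₀
  have hv := (lam_continuous gv ρv).continuousAt (x := φ₀)
  have hx := (lam_continuous gx ρx).continuousAt (x := φ₀)
  rw [Metric.continuousAt_iff] at hv hx
  obtain ⟨δ₁, hδ₁, hv⟩ := hv E hE0
  obtain ⟨δ₂, hδ₂, hx⟩ := hx E hE0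
  obtain ⟨N, hN5, m, hm⟩ := angle_close φ₀ (min δ₁ δ₂) (lt_min hδ₁ hδ₂)
  set φ := 2 * Real.pi * m / N with hφ
  have hdv : ‖lam gv ρv φ - lam gv ρv φ₀‖ < E := by
    have := hv (show dist φ φ₀ < δ₁ from lt_of_lt_of_le hm (min_le_left _ _))
    simpa [dist_eq_norm] using this
  have hdx : ‖lam gx ρx φ - lam gx ρx φ₀‖ < E := by
    have := hx (show dist φ φ₀ < δ₂ from lt_of_lt_of_le hm (min_le_right _ _))
    simpa [dist_eq_norm] using this
  obtain ⟨r, hr, hdist⟩ := quad_root (lam gv ρv φ₀) (lam gx ρx φ₀)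
    (lam gv ρv φ) (lam gx ρx φ) ν hφ₀
  refine ⟨r, ⟨N, hN5, m, hr⟩, ?_⟩
  rw [dist_eq_norm]
  have hb : ‖(lam gv ρv φ₀ - lam gv ρv φ) * ν + (lam gx ρx φ₀ - lam gx ρx φ)‖
      ≤ ‖lam gv ρv φ - lam gv ρv φ₀‖ * ‖ν‖ + ‖lam gx ρx φ - lam gx ρx φ₀‖ := by
    calc _ ≤ ‖(lam gv ρv φ₀ - lam gv ρv φ) * ν‖ + ‖lam gx ρx φ₀ - lam gx ρx φ‖ :=
          norm_add_le _ _
      _ = ‖lam gv ρv φ - lam gv ρv φ₀‖ * ‖ν‖ + ‖lam gx ρx φ - lam gx ρx φ₀‖ := by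
          rw [norm_mul, ← norm_neg (lam gv ρv φ₀ - lam gv ρv φ),
            ← norm_neg (lam gx ρx φ₀ - lam gx ρx φ)]; ring_nf
  have hlt : ‖ν - r‖ ^ 2 < ε ^ 2 := by
    have hkey : E * (‖ν‖ + 1) = ε ^ 2 / 2 := by
      rw [hE]; field_simp
    nlinarith [norm_nonneg ν, norm_nonneg (lam gx ρx φ - lam gx ρx φ₀)]
  nlinarith [norm_nonneg (ν - r)]
end

section
/- Let g_x, g_v be real numbers and ρ_{x,j}, ρ_{v,j} (j = −2,…,2) real coefficients with Σ_{j=-2}^{2} ρ_{x,j} = Σ_{j=-2}^{2} ρ_{v,j} = 0. Define λ_x(φ) = g_x·Σ_{j=-2}^{2} ρ_{x,j} e^{iφj}, λ_v(φ) = g_v·Σ_{j=-2}^{2} ρ_{v,j} e^{iφj}, and β_{x,j} = ρ_{x,j} − ρ_{x,−j} for j = 1,2. If g_x·(β_{x,1} + 2β_{x,2}) ≠ 0, then there exists ε > 0 such that for every φ with 0 < φ < ε there is a complex number ν with ν² − λ_v(φ)·ν − λ_x(φ) = 0 and Re ν > 0. -/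
open Filter Topology Complex

theorem Complex.exists_sq_eq_of_re_nonneg (z : ℂ) : ∃ w : ℂ, w ^ 2 = z ∧ 0 ≤ w.re := by
  obtain ⟨w, hw⟩ := IsAlgClosed.exists_pow_nat_eq z two_pos
  rcases le_total 0 w.re with hre | hre
  · exact ⟨w, hw, hre⟩
  · exact ⟨-w, by rwa [neg_sq], by simpa using hre⟩

theorem Complex.abs_im_sq_le (w : ℂ) (hw : 0 ≤ w.re) : |(w ^ 2).im| ≤ 2 * w.re * ‖w‖ := by
  have h : (w ^ 2).im = 2 * w.re * w.im := by rw [sq, mul_im]; ring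
  rw [h, abs_mul, abs_of_nonneg (by positivity)]
  exact mul_le_mul_of_nonneg_left (abs_im_le_norm w) (by positivity)

theorem Complex.exists_quadratic_root_re_pos (a b : ℂ)
    (h : 4 * ‖a‖ ^ 2 * ‖a ^ 2 + 4 * b‖ < (a ^ 2 + 4 * b).im ^ 2) :
    ∃ ν : ℂ, ν ^ 2 - a * ν - b = 0 ∧ 0 < ν.re := by
  obtain ⟨w, hw, hre⟩ := exists_sq_eq_of_re_nonneg (a ^ 2 + 4 * b)
  have hlt : ‖a‖ < w.re := by
    by_contra! hle
    have him : |(w ^ 2).im| ≤ 2 * ‖a‖ * ‖w‖ := (abs_im_sq_le w hre).trans (by gcongr)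
    have hsq : (w ^ 2).im ^ 2 ≤ 4 * ‖a‖ ^ 2 * ‖w ^ 2‖ := by
      rw [norm_pow, ← sq_abs]
      nlinarith [abs_nonneg (w ^ 2).im]
    rw [hw] at hsq
    linarith
  refine ⟨(a + w) / 2, by linear_combination hw / 4, ?_⟩
  simp only [div_ofNat_re, add_re]
  linarith [neg_abs_le a.re, abs_re_le_norm a]

theorem eventually_exists_quadratic_root_re_pos {a b : ℝ → ℂ} {a' b' : ℂ}
    (ha : HasDerivAt a a' 0) (hb : HasDerivAt b b' 0) (ha0 : a 0 = 0) (hb0 : b 0 = 0)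
    (hb' : b'.im ≠ 0) :
    ∀ᶠ φ in 𝓝[≠] 0, ∃ ν : ℂ, ν ^ 2 - a φ * ν - b φ = 0 ∧ 0 < ν.re := by
  let u : ℝ → ℂ := fun φ => (φ : ℂ)⁻¹ * a φ
  let v : ℝ → ℂ := fun φ => (φ : ℂ)⁻¹ * b φ
  have hu : Tendsto u (𝓝[≠] 0) (𝓝 a') := by
    simpa [hasDerivAt_iff_tendsto_slope_zero, ha0, Complex.real_smul] using ha
  have hv : Tendsto v (𝓝[≠] 0) (𝓝 b') := by
    simpa [hasDerivAt_iff_tendsto_slope_zero, hb0, Complex.real_smul] using hb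
  have hlim : Tendsto (fun φ => (φ, u φ, v φ)) (𝓝[≠] 0) (𝓝 (0, a', b')) :=
    (tendsto_nhdsWithin_of_tendsto_nhds tendsto_id).prodMk_nhds (hu.prodMk_nhds hv)
  -- With `a φ = φ u φ` and `b φ = φ v φ`, the hypothesis of `exists_quadratic_root_re_pos`
  -- is `φ² · L < φ² · R` at `(φ, u φ, v φ)`.
  let L : ℝ × ℂ × ℂ → ℝ := fun p => 4 * ‖p.2.1‖ ^ 2 * ‖p.1 * p.2.1 ^ 2 + 4 * p.2.2‖ * |p.1|
  let R : ℝ × ℂ × ℂ → ℝ := fun p => (p.1 * p.2.1 ^ 2 + 4 * p.2.2).im ^ 2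
  have hL : Tendsto (L ∘ fun φ => (φ, u φ, v φ)) (𝓝[≠] 0) (𝓝 0) := by
    simpa [L] using ((by fun_prop : Continuous L).tendsto _).comp hlim
  have hR : Tendsto (R ∘ fun φ => (φ, u φ, v φ)) (𝓝[≠] 0) (𝓝 ((4 * b'.im) ^ 2)) := by
    simpa [R] using ((by fun_prop : Continuous R).tendsto _).comp hlim
  filter_upwards [hL.eventually_lt hR (by positivity), self_mem_nhdsWithin] with φ hφ hne
  apply exists_quadratic_root_re_pos
  replace hne : φ ≠ 0 := hne
  have hne' : (φ : ℂ) ≠ 0 := ofReal_ne_zero.mpr hne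
  have hau : a φ = φ * u φ := by simp [u, hne']
  have hbv : b φ = φ * v φ := by simp [v, hne']
  have hz : a φ ^ 2 + 4 * b φ = φ * (φ * u φ ^ 2 + 4 * v φ) := by rw [hau, hbv]; ring
  simp only [Function.comp, L, R] at hφ
  rw [hz, im_ofReal_mul, norm_mul, hau, norm_mul, norm_real, Real.norm_eq_abs]
  have hφ2 : 0 < φ ^ 2 := by positivity
  calc _ = φ ^ 2 * (4 * ‖u φ‖ ^ 2 * ‖(φ : ℂ) * u φ ^ 2 + 4 * v φ‖ * |φ|) := by
        rw [← sq_abs φ]; ring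
    _ < φ ^ 2 * ((φ : ℂ) * u φ ^ 2 + 4 * v φ).im ^ 2 := by gcongr
    _ = _ := by ring

theorem lam_zero (g : ℝ) (ρ : ℤ → ℝ) :
    lam g ρ 0 = g * (∑ j ∈ Finset.Icc (-2 : ℤ) 2, ρ j : ℝ) := by
  simp [lam]

theorem hasDerivAt_lam (g : ℝ) (ρ : ℤ → ℝ) (φ : ℝ) :
    HasDerivAt (lam g ρ)
      (g * ∑ j ∈ Finset.Icc (-2 : ℤ) 2, ρ j * (exp (I * φ * j) * (I * j))) φ := by
  have hexp (j : ℤ) : HasDerivAt (fun φ : ℝ => exp (I * φ * j)) (exp (I * φ * j) * (I * j)) φ :=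
    HasDerivAt.cexp <| by
      simpa using ((hasDerivAt_id φ).ofReal_comp.const_mul I).mul_const (j : ℂ)
  exact (HasDerivAt.fun_sum fun j _ => (hexp j).const_mul (ρ j : ℂ)).const_mul (g : ℂ)

theorem hasDerivAt_lam_zero (g : ℝ) (ρ : ℤ → ℝ) :
    HasDerivAt (lam g ρ) (I * (g * ∑ j ∈ Finset.Icc (-2 : ℤ) 2, ρ j * j : ℝ)) 0 := by
  convert hasDerivAt_lam g ρ 0 using 1
  push_cast
  simp only [mul_zero, zero_mul, exp_zero, one_mul, Finset.mul_sum]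
  exact Finset.sum_congr rfl fun j _ => by ring

theorem sum_Icc_neg_two_two_mul_self (ρ : ℤ → ℝ) :
    ∑ j ∈ Finset.Icc (-2 : ℤ) 2, ρ j * j = (ρ 1 - ρ (-1)) + 2 * (ρ 2 - ρ (-2)) := by
  rw [show Finset.Icc (-2 : ℤ) 2 = {-2, -1, 0, 1, 2} by decide]
  simp
  ring

/-- Lemma 4(i) of the paper: for the decentralized next-nearest-neighbor
system, if `g_x·(β_{x,1} + 2β_{x,2}) ≠ 0` (where `β_{x,j} = ρ_{x,j} − ρ_{x,−j}`),
then for all sufficiently small `φ > 0` the characteristic equation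
`ν² − λ_v(φ)ν − λ_x(φ) = 0` has a root with positive real part. -/
theorem unstable_of_betaSum_ne_zero (gx gv : ℝ) (ρx ρv : ℤ → ℝ)
    (hxsum : ∑ j ∈ Finset.Icc (-2 : ℤ) 2, ρx j = 0)
    (hvsum : ∑ j ∈ Finset.Icc (-2 : ℤ) 2, ρv j = 0)
    (h : gx * ((ρx 1 - ρx (-1)) + 2 * (ρx 2 - ρx (-2))) ≠ 0) :
    ∃ ε > 0, ∀ φ : ℝ, 0 < φ → φ < ε →
      ∃ ν : ℂ, ν ^ 2 - lam gv ρv φ * ν - lam gx ρx φ = 0 ∧ 0 < ν.re := by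
  have hslope : (I * ((gx * ∑ j ∈ Finset.Icc (-2 : ℤ) 2, ρx j * j : ℝ) : ℂ)).im ≠ 0 := by
    simpa [sum_Icc_neg_two_two_mul_self] using h
  have hroot := eventually_exists_quadratic_root_re_pos (hasDerivAt_lam_zero gv ρv)
    (hasDerivAt_lam_zero gx ρx) (by simp [lam_zero, hvsum]) (by simp [lam_zero, hxsum]) hslope
  obtain ⟨ε, hε, hsub⟩ :=
    mem_nhdsGT_iff_exists_Ioo_subset.mp (hroot.filter_mono (nhdsGT_le_nhdsNE 0))
  exact ⟨ε, hε, fun φ h0 h1 => hsub ⟨h0, h1⟩⟩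
end

section
/- Let α be a real number. Then 1 + α·cos φ − (1 + α)·cos(2φ) ≥ 0 holds for all φ ∈ ℝ if and only if −4/3 ≤ α ≤ 0. -/
/-- Lemma 4(iii) of the paper: the trigonometric inequality
`1 + α·cos φ − (1 + α)·cos 2φ ≥ 0` holds for all `φ` if and only if
`−4/3 ≤ α ≤ 0`. -/
theorem trig_ineq_iff (α : ℝ) :
    (∀ φ : ℝ, 0 ≤ 1 + α * Real.cos φ - (1 + α) * Real.cos (2 * φ)) ↔
      -4 / 3 ≤ α ∧ α ≤ 0 := by
  constructor
  · intro h
    constructor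
    · by_contra hlt
      push_neg at hlt
      -- α < -4/3, pick c between the root and 1
      set c0 : ℝ := (2 + α) / (-(2 + 2 * α)) with hc0
      have h2a : 2 + 2 * α < 0 := by linarith
      have hpos : (0:ℝ) < -(2 + 2 * α) := by linarith
      have hroot : -1 < c0 ∧ c0 < 1 := by
        constructor
        · rw [hc0, lt_div_iff₀ hpos]
          linarith
        · rw [hc0, div_lt_iff₀ hpos]
          linarith
      set c : ℝ := (c0 + 1) / 2 with hc
      have hc1 : c < 1 := by rw [hc]; linarith [hroot.2]
      have hcm1 : -1 ≤ c := by rw [hc]; linarith [hroot.1]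
      have hcos : Real.cos (Real.arccos c) = c := Real.cos_arccos hcm1 (le_of_lt hc1)
      have := h (Real.arccos c)
      rw [Real.cos_two_mul, hcos] at this
      -- linear factor is negative at c since c > c0 and slope negative
      have hfc : (2 + 2 * α) * c + 2 + α < 0 := by
        have hcgt : c0 < c := by rw [hc]; linarith [hroot.2]
        have : (2 + 2 * α) * c < (2 + 2 * α) * c0 :=
          (mul_lt_mul_left_of_neg h2a).mpr hcgt
        have hne : -(2 + 2 * α) ≠ 0 := ne_of_gt hpos
        have hc0eq : (2 + 2 * α) * c0 = -(2 + α) := by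
          have h' := (eq_div_iff hne).mp hc0
          linear_combination -h'
        linarith
      nlinarith [hfc, hc1]
    · have := h Real.pi
      simp [Real.cos_two_pi, Real.cos_pi] at this
      linarith [this]
  · rintro ⟨h1, h2⟩ φ
    have hc1 : Real.cos φ ≤ 1 := Real.cos_le_one φ
    have hcm1 : -1 ≤ Real.cos φ := Real.neg_one_le_cos φ
    rw [Real.cos_two_mul]
    nlinarith [mul_nonneg (mul_nonneg (by linarith : (0:ℝ) ≤ 1 - Real.cos φ) (by linarith : (0:ℝ) ≤ 1 - Real.cos φ)) (by linarith : (0:ℝ) ≤ -α),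
      mul_nonneg (mul_nonneg (by linarith : (0:ℝ) ≤ 1 - Real.cos φ) (by linarith : (0:ℝ) ≤ 1 + Real.cos φ)) (by linarith : (0:ℝ) ≤ 3*α + 4)]
end

section
/- Let g_x, g_v be real numbers and ρ_{x,j}, ρ_{v,j} (j = −2,…,2) real coefficients with ρ_{x,0} = ρ_{v,0} = 1 and Σ_{j=-2}^{2} ρ_{x,j} = Σ_{j=-2}^{2} ρ_{v,j} = 0. Define λ_x(φ) = g_x·Σ_{j=-2}^{2} ρ_{x,j} e^{iφj}, λ_v(φ) = g_v·Σ_{j=-2}^{2} ρ_{v,j} e^{iφj}, and α_{x,1} = ρ_{x,1} + ρ_{x,−1}. If every complex root ν of ν² − λ_v(π)·ν − λ_x(π) = 0 has nonpositive real part, then g_x·α_{x,1} ≥ 0. -/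
/-- `e^{iπj} = (-1)^j` for integer `j`. -/
lemma exp_pi_j_aux (j : ℤ) :
    Complex.exp (Complex.I * (Real.pi : ℂ) * (j : ℂ)) = (-1 : ℂ) ^ j := by
  rw [show Complex.I * (Real.pi : ℂ) * (j : ℂ) = (j : ℤ) * ((Real.pi : ℂ) * Complex.I) by ring,
    Complex.exp_int_mul, Complex.exp_pi_mul_I]

/-- Value of `lam` at `φ = π`: it is real. -/
lemma lam_pi_aux (g : ℝ) (ρ : ℤ → ℝ) :
    lam g ρ Real.pi = ((g * (ρ (-2) - ρ (-1) + ρ 0 - ρ 1 + ρ 2) : ℝ) : ℂ) := by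
  unfold lam
  rw [show Finset.Icc (-2 : ℤ) 2 = ({-2,-1,0,1,2} : Finset ℤ) by decide]
  simp only [exp_pi_j_aux]
  simp [Finset.sum_insert, Finset.mem_insert, Finset.mem_singleton]
  ring_nf
  tauto

/-- Expanding the Icc sum. -/
lemma sum_icc_aux (ρ : ℤ → ℝ) :
    ∑ j ∈ Finset.Icc (-2 : ℤ) 2, ρ j = ρ (-2) + ρ (-1) + ρ 0 + ρ 1 + ρ 2 := by
  rw [show Finset.Icc (-2 : ℤ) 2 = ({-2,-1,0,1,2} : Finset ℤ) by decide]
  simp [Finset.sum_insert, Finset.mem_insert, Finset.mem_singleton]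
  ring

/-- Lemma 4(iv) of the paper: for the decentralized next-nearest-neighbor
system, if every root of the characteristic equation at `φ = π` has
nonpositive real part, then `g_x·α_{x,1} ≥ 0`, where `α_{x,1} = ρ_{x,1} + ρ_{x,−1}`. -/
theorem gx_alpha_nonneg_of_stable_at_pi (gx gv : ℝ) (ρx ρv : ℤ → ℝ)
    (hx0 : ρx 0 = 1) (hv0 : ρv 0 = 1)
    (hxsum : ∑ j ∈ Finset.Icc (-2 : ℤ) 2, ρx j = 0)
    (hvsum : ∑ j ∈ Finset.Icc (-2 : ℤ) 2, ρv j = 0)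
    (h : ∀ ν : ℂ, ν ^ 2 - lam gv ρv Real.pi * ν - lam gx ρx Real.pi = 0 →
      ν.re ≤ 0) :
    0 ≤ gx * (ρx 1 + ρx (-1)) := by
  set A : ℝ := gx * (ρx 1 + ρx (-1)) with hA
  by_contra hneg
  push_neg at hneg
  rw [sum_icc_aux] at hxsum
  have hlx : lam gx ρx Real.pi = ((-2 * A : ℝ) : ℂ) := by
    rw [lam_pi_aux]
    congr 1
    rw [hx0] at hxsum
    have : ρx (-2) - ρx (-1) + ρx 0 - ρx 1 + ρx 2 = -2 * (ρx 1 + ρx (-1)) := by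
      rw [hx0]; linarith
    rw [this, hA]; ring
  set c : ℝ := gv * (ρv (-2) - ρv (-1) + ρv 0 - ρv 1 + ρv 2) with hc
  have hlv : lam gv ρv Real.pi = ((c : ℝ) : ℂ) := lam_pi_aux gv ρv
  have hdisc : 0 < c ^ 2 - 8 * A := by nlinarith [sq_nonneg c]
  set s : ℝ := Real.sqrt (c ^ 2 - 8 * A) with hs
  have hs2 : s ^ 2 = c ^ 2 - 8 * A := Real.sq_sqrt hdisc.le
  have hsgt : -c < s := by
    rcases le_or_gt (-c) 0 with h0 | h0
    · exact h0.trans_lt (Real.sqrt_pos.mpr hdisc)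
    · nlinarith [Real.sqrt_nonneg (c ^ 2 - 8 * A)]
  set ν : ℝ := (c + s) / 2 with hν
  have hνpos : 0 < ν := by rw [hν]; linarith
  have hroot : ν ^ 2 - c * ν - (-2 * A) = 0 := by
    rw [hν]; nlinarith [hs2]
  have := h (ν : ℂ) (by
    rw [hlx, hlv]
    push_cast
    exact_mod_cast congrArg (fun x : ℝ => (x : ℂ)) hroot)
  simp at this
  linarith
end

section
/- Let g_x, g_v be real numbers and ρ_{x,j}, ρ_{v,j} (j = −2,…,2) real coefficients with ρ_{x,0} = ρ_{v,0} = 1 and Σ_{j=-2}^{2} ρ_{x,j} = Σ_{j=-2}^{2} ρ_{v,j} = 0. Define λ_x(φ) = g_x·Σ_{j=-2}^{2} ρ_{x,j} e^{iφj}, λ_v(φ) = g_v·Σ_{j=-2}^{2} ρ_{v,j} e^{iφj}, α_{x,1} = ρ_{x,1} + ρ_{x,−1}, α_{v,1} = ρ_{v,1} + ρ_{v,−1}, β_{x,1} = ρ_{x,1} − ρ_{x,−1}, β_{x,2} = ρ_{x,2} − ρ_{x,−2}, β_{v,1} = ρ_{v,1} − ρ_{v,−1}, β_{v,2} = ρ_{v,2}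 − ρ_{v,−2}, s = β_{v,1} + 2β_{v,2}, and D = g_v²·s² − 2g_x·(4 + 3α_{x,1}). Assume β_{x,1} + 2β_{x,2} = 0 and D > 0. Then there exist ε > 0 and functions ν_+, ν_− : (−ε, ε) → ℂ such that for each φ ∈ (−ε, ε) and each sign choice ±, ν_±(φ)² − λ_v(φ)·ν_±(φ) − λ_x(φ) = 0, and as φ → 0: ν_±(φ) = (iφ/2)·(g_v·s ± √D) + (φ²/4)·[g_v·(4 + 3α_{v,1}) ± (g_v²·s·(4 + 3α_{v,1}) + 2g_x·β_{x,1})/√D] + o(φ²). -/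
/-!
The stencil sums give `λ_v(φ) = i g_v s φ + g_v (4 + 3α_{v,1}) φ²/2 + o(φ²)` and, because
`β_{x,1} + 2β_{x,2} = 0` kills the linear term, `λ_x(φ) = g_x (4 + 3α_{x,1}) φ²/2
+ i g_x β_{x,1} φ³/2 + o(φ³)`. Hence the discriminant is `λ_v² + 4λ_x = -Dφ² + iKφ³ + o(φ³)`
with `K = g_v² s (4 + 3α_{v,1}) + 2 g_x β_{x,1}`, and
`q = iφ√D · √(1 - iKφ/D + o(φ)) = iφ√D + Kφ²/(2√D) + o(φ²)` is a square root of it.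
The roots are `ν_± = (λ_v ± q)/2`; as the principal complex square root squares back to its
argument everywhere, they solve the quadratic for every `φ`.
-/

open Asymptotics

open Filter Topology Finset Complex

lemma cexp_mul_sub_sum_isLittleO (c : ℂ) (n : ℕ) :
    (fun φ : ℝ => exp (c * φ) - ∑ k ∈ range (n + 1), (c * φ) ^ k / k.factorial)
      =o[𝓝 0] (· ^ n) := by
  have hc : Tendsto (fun φ : ℝ => c * φ) (𝓝 0) (𝓝 0) := by
    simpa using ((continuous_ofReal.const_mul c).tendsto 0)
  refine ((exp_sub_sum_range_succ_isLittleO_pow n).comp_tendsto hc).trans_isBigO ?_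
  refine IsBigO.of_bound (‖c‖ ^ n) (Eventually.of_forall fun φ => ?_)
  simp [mul_pow, norm_pow]

lemma sum_Icc_neg_two_two {M : Type*} [AddCommMonoid M] (f : ℤ → M) :
    ∑ j ∈ Icc (-2 : ℤ) 2, f j = f (-2) + f (-1) + f 0 + f 1 + f 2 := by
  rw [show Icc (-2 : ℤ) 2 = {-2, -1, 0, 1, 2} by decide]
  simp [add_assoc]

lemma lam_sub_taylor_isLittleO (g : ℝ) (ρ : ℤ → ℝ) (n : ℕ) :
    (fun φ : ℝ => lam g ρ φ - g * ∑ j ∈ Icc (-2 : ℤ) 2,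
        (ρ j : ℂ) * ∑ k ∈ range (n + 1), (I * φ * j) ^ k / k.factorial) =o[𝓝 0] (· ^ n) := by
  have hterm (j : ℤ) := (cexp_mul_sub_sum_isLittleO (I * j) n).const_mul_left (ρ j : ℂ)
  refine ((IsLittleO.fun_sum (s := Icc (-2 : ℤ) 2) fun j _ => hterm j).const_mul_left (g : ℂ))
    |>.congr_left fun φ => ?_
  simp only [lam, ← mul_sub, ← sum_sub_distrib, mul_right_comm I (φ : ℂ)]

lemma lam_sub_isLittleO_sq (g : ℝ) {ρ : ℤ → ℝ} (h0 : ρ 0 = 1)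
    (hsum : ∑ j ∈ Icc (-2 : ℤ) 2, ρ j = 0) :
    (fun φ : ℝ => lam g ρ φ -
      (I * φ * ((g * ((ρ 1 - ρ (-1)) + 2 * (ρ 2 - ρ (-2))) : ℝ) : ℂ) +
        (φ : ℂ) ^ 2 / 2 * ((g * (4 + 3 * (ρ 1 + ρ (-1))) : ℝ) : ℂ))) =o[𝓝 0] (· ^ 2) := by
  rw [sum_Icc_neg_two_two] at hsum
  have h0' : (ρ 0 : ℂ) = 1 := by exact_mod_cast h0
  have hsum' : (ρ (-2) + ρ (-1) + ρ 0 + ρ 1 + ρ 2 : ℂ) = 0 := by exact_mod_cast hsum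
  refine (lam_sub_taylor_isLittleO g ρ 2).congr_left fun φ => ?_
  simp only [sum_Icc_neg_two_two, sum_range_succ, sum_range_zero]
  push_cast
  linear_combination (g * (2 * φ ^ 2 - 1) : ℂ) * hsum' - (2 * g * φ ^ 2 : ℂ) * h0'
    - (g * φ ^ 2 * (4 * ρ (-2) + ρ (-1) + ρ 1 + 4 * ρ 2) / 2 : ℂ) * I_sq

lemma lam_sub_isLittleO_cube (g : ℝ) {ρ : ℤ → ℝ} (h0 : ρ 0 = 1)
    (hsum : ∑ j ∈ Icc (-2 : ℤ) 2, ρ j = 0) (hβ : (ρ 1 - ρ (-1)) + 2 * (ρ 2 - ρ (-2)) = 0) :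
    (fun φ : ℝ => lam g ρ φ -
      ((φ : ℂ) ^ 2 / 2 * ((g * (4 + 3 * (ρ 1 + ρ (-1))) : ℝ) : ℂ) +
        I * (φ : ℂ) ^ 3 / 2 * ((g * (ρ 1 - ρ (-1)) : ℝ) : ℂ))) =o[𝓝 0] (· ^ 3) := by
  rw [sum_Icc_neg_two_two] at hsum
  have h0' : (ρ 0 : ℂ) = 1 := by exact_mod_cast h0
  have hsum' : (ρ (-2) + ρ (-1) + ρ 0 + ρ 1 + ρ 2 : ℂ) = 0 := by exact_mod_cast hsum
  have hβ' : ((ρ 1 - ρ (-1)) + 2 * (ρ 2 - ρ (-2)) : ℂ) = 0 := by exact_mod_cast hβ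
  refine (lam_sub_taylor_isLittleO g ρ 3).congr_left fun φ => ?_
  simp only [sum_Icc_neg_two_two, sum_range_succ, sum_range_zero]
  push_cast
  linear_combination (g * (2 * φ ^ 2 - 1) : ℂ) * hsum' - (2 * g * φ ^ 2 : ℂ) * h0'
    - (g * I * φ * (1 - 2 / 3 * φ ^ 2) : ℂ) * hβ'
    - (g * φ ^ 2 * (4 * ρ (-2) + ρ (-1) + ρ 1 + 4 * ρ 2) / 2
        + g * I * φ ^ 3 * (-8 * ρ (-2) - ρ (-1) + ρ 1 + 8 * ρ 2) / 6 : ℂ) * I_sq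

lemma Complex.sqrt_sub_one_sub_half_isLittleO {α : Type*} {l : Filter α} {u : α → ℂ}
    (hu : Tendsto u l (𝓝 1)) :
    (fun x => sqrt (u x) - 1 - (u x - 1) / 2) =o[l] (fun x => u x - 1) := by
  have h := (hasDerivAt_iff_isLittleO.1 (hasDerivAt_sqrt one_mem_slitPlane)).comp_tendsto hu
  simpa [Function.comp_def, div_eq_mul_inv, mul_comm] using h

lemma Complex.sq_sqrt (z : ℂ) : sqrt z ^ 2 = z := by
  simp [sqrt]

lemma Asymptotics.IsLittleO.div_const_mul_sq {f : ℝ → ℂ} (hf : f =o[𝓝 0] (· ^ 3)) (c : ℂ) :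
    (fun φ : ℝ => f φ / (c * φ ^ 2)) =o[𝓝 0] id := by
  have hinv : (fun φ : ℝ => (c * φ ^ 2)⁻¹) =O[𝓝 0] (fun φ : ℝ => (φ ^ 2)⁻¹) :=
    IsBigO.of_bound ‖c‖⁻¹ (Eventually.of_forall fun φ => by simp [norm_pow, mul_comm])
  refine (hf.mul_isBigO hinv).congr (fun φ => div_eq_mul_inv _ _) fun φ => ?_
  rcases eq_or_ne φ 0 with rfl | hφ
  · simp
  · field_simp; rfl

lemma exists_sq_eq_isLittleO {f : ℝ → ℂ} {D K : ℝ} (hD : 0 < D)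
    (hf : (fun φ : ℝ => f φ - (-D * φ ^ 2 + I * K * φ ^ 3)) =o[𝓝 0] (· ^ 3)) :
    ∃ q : ℝ → ℂ, (∀ φ, q φ ^ 2 = f φ) ∧
      (fun φ : ℝ => q φ - (I * φ * √D + φ ^ 2 * (K / (2 * √D) : ℝ))) =o[𝓝 0] (· ^ 2) := by
  have hf0 : f 0 = 0 := by simpa using hf.isBigO.eq_zero_imp.self_of_nhds (by simp)
  obtain ⟨r, hr_def⟩ : ∃ r : ℝ → ℂ,
      ∀ φ, r φ = (f φ - (-D * φ ^ 2 + I * K * φ ^ 3)) / (-D * φ ^ 2) := ⟨_, fun _ => rfl⟩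
  have hr : r =o[𝓝 0] id := (hf.div_const_mul_sq _).congr_left fun φ => (hr_def φ).symm
  -- Through `r`, `u 0 = 1` rather than the junk value `f 0 / 0 = 0`.
  obtain ⟨u, hu_def⟩ : ∃ u : ℝ → ℂ, ∀ φ, u φ = 1 - I * (K / D : ℝ) * φ + r φ :=
    ⟨_, fun _ => rfl⟩
  have hfu (φ : ℝ) : f φ = -D * φ ^ 2 * u φ := by
    rcases eq_or_ne φ 0 with rfl | hφ
    · simp [hf0]
    · have hφ' : (φ : ℂ) ≠ 0 := by exact_mod_cast hφ
      have hD' : (D : ℂ) ≠ 0 := by exact_mod_cast hD.ne'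
      rw [hu_def, hr_def]
      push_cast
      field_simp
      ring
  have hu1 : (fun φ => u φ - 1) =O[𝓝 0] id :=
    (((isTheta_ofReal id _).isBigO.const_mul_left (-I * (K / D : ℝ))).add hr.isBigO).congr_left
      fun φ => by rw [hu_def, id]; ring
  have hu : Tendsto u (𝓝 0) (𝓝 1) := by
    simpa using (hu1.trans_tendsto tendsto_id).add_const 1
  have hsqrt : (fun φ => sqrt (u φ) - 1 - (u φ - 1) / 2 + r φ / 2) =o[𝓝 0] id :=
    ((sqrt_sub_one_sub_half_isLittleO hu).trans_isBigO hu1).add (hr.const_mul_left (1 / 2))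
      |>.congr_left fun φ => by ring
  refine ⟨fun φ => I * φ * √D * sqrt (u φ), fun φ => ?_, ?_⟩
  · have hsD : ((√D : ℝ) : ℂ) ^ 2 = D := by exact_mod_cast Real.sq_sqrt hD.le
    rw [mul_pow, sq_sqrt, hfu, mul_pow, mul_pow, hsD, I_sq]
    ring
  · have hcoef : K / (2 * √D) = √D * (K / D) / 2 := by
      have hsD : √D ≠ 0 := (Real.sqrt_pos.2 hD).ne'
      field_simp
      rw [Real.sq_sqrt hD.le]
    refine (((isTheta_ofReal id _).isBigO.const_mul_left (I * √D)).mul_isLittleO hsqrt).congr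
      (fun φ => ?_) fun φ => by simp [sq]
    have hkey : u φ - 1 - r φ = -I * (K / D : ℝ) * φ := by rw [hu_def]; ring
    rw [id, hcoef]
    push_cast at hkey ⊢
    linear_combination (-I * √D * φ / 2) * hkey + (√D * K / D * φ ^ 2 / 2) * I_sq

lemma isBigO_ofReal_pow (l : Filter ℝ) (n : ℕ) : (fun φ : ℝ => (φ : ℂ) ^ n) =O[l] (· ^ n) :=
  (isTheta_ofReal (· ^ n) l).isBigO.congr_left fun φ => by push_cast; rfl

lemma discriminant_sub_isLittleO {lv lx : ℝ → ℂ} {a b bx cx D K : ℝ}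
    (hD : D = a ^ 2 - 2 * bx) (hK : K = a * b + 2 * cx)
    (hv : (fun φ : ℝ => lv φ - (I * φ * a + φ ^ 2 / 2 * b)) =o[𝓝 0] (· ^ 2))
    (hx : (fun φ : ℝ => lx φ - (φ ^ 2 / 2 * bx + I * φ ^ 3 / 2 * cx)) =o[𝓝 0] (· ^ 3)) :
    (fun φ : ℝ => lv φ ^ 2 + 4 * lx φ - (-D * φ ^ 2 + I * K * φ ^ 3)) =o[𝓝 0] (· ^ 3) := by
  have hsq : (fun φ : ℝ => (φ : ℂ) ^ 2) =O[𝓝 0] (· ^ 1) :=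
    (isBigO_ofReal_pow _ 2).trans (isLittleO_pow_pow one_lt_two).isBigO
  have hP : (fun φ : ℝ => I * φ * a + φ ^ 2 / 2 * b) =O[𝓝 0] (· ^ 1) :=
    ((isBigO_ofReal_pow _ 1).const_mul_left (I * a)).add (hsq.const_mul_left (b / 2))
      |>.congr_left fun φ => by ring
  have hlv : lv =O[𝓝 0] (· ^ 1) :=
    ((hv.isBigO.trans (isLittleO_pow_pow one_lt_two).isBigO).add hP).congr_left fun φ => by ring
  have hcross := hv.mul_isBigO (hlv.add hP)
  have hquartic := ((isBigO_ofReal_pow _ 4).trans_isLittleO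
    (isLittleO_pow_pow (by norm_num : 3 < 4))).const_mul_left ((b : ℂ) ^ 2 / 4)
  refine ((hcross.congr_right fun φ => by ring).add hquartic |>.add
    (hx.const_mul_left 4)).congr_left fun φ => ?_
  have hD' : (D : ℂ) = a ^ 2 - 2 * bx := by exact_mod_cast hD
  have hK' : (K : ℂ) = a * b + 2 * cx := by exact_mod_cast hK
  linear_combination I * (φ : ℂ) ^ 3 * hK' - (φ : ℂ) ^ 2 * hD' - (a * φ) ^ 2 * I_sq

lemma exists_roots_isLittleO {lv lx : ℝ → ℂ} {a b bx cx D K : ℝ} (hDpos : 0 < D)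
    (hD : D = a ^ 2 - 2 * bx) (hK : K = a * b + 2 * cx)
    (hv : (fun φ : ℝ => lv φ - (I * φ * a + φ ^ 2 / 2 * b)) =o[𝓝 0] (· ^ 2))
    (hx : (fun φ : ℝ => lx φ - (φ ^ 2 / 2 * bx + I * φ ^ 3 / 2 * cx)) =o[𝓝 0] (· ^ 3)) :
    ∃ νp νm : ℝ → ℂ,
      (∀ φ, νp φ ^ 2 - lv φ * νp φ - lx φ = 0) ∧ (∀ φ, νm φ ^ 2 - lv φ * νm φ - lx φ = 0) ∧
      (fun φ : ℝ => νp φ - (I * φ / 2 * ((a + √D : ℝ) : ℂ) +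
        (φ : ℂ) ^ 2 / 4 * ((b + K / √D : ℝ) : ℂ))) =o[𝓝 0] (· ^ 2) ∧
      (fun φ : ℝ => νm φ - (I * φ / 2 * ((a - √D : ℝ) : ℂ) +
        (φ : ℂ) ^ 2 / 4 * ((b - K / √D : ℝ) : ℂ))) =o[𝓝 0] (· ^ 2) := by
  obtain ⟨q, hq, hqo⟩ := exists_sq_eq_isLittleO hDpos (discriminant_sub_isLittleO hD hK hv hx)
  refine ⟨fun φ => (lv φ + q φ) / 2, fun φ => (lv φ - q φ) / 2,
    fun φ => by linear_combination hq φ / 4, fun φ => by linear_combination hq φ / 4, ?_, ?_⟩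
  · refine ((hv.add hqo).const_mul_left (1 / 2)).congr_left fun φ => ?_
    push_cast
    ring
  · refine ((hv.sub hqo).const_mul_left (1 / 2)).congr_left fun φ => ?_
    push_cast
    ring

/-- Proposition 1 of the paper: low-frequency expansion of the two root
branches `ν_±(φ)` of the characteristic equation `ν² − λ_v(φ)ν − λ_x(φ) = 0`,
under the assumptions `β_{x,1} + 2β_{x,2} = 0` and
`D = g_v²(β_{v,1}+2β_{v,2})² − 2g_x(4+3α_{x,1}) > 0`:
`ν_±(φ) = (iφ/2)(g_v s ± √D) + (φ²/4)[g_v(4+3α_{v,1}) ± (g_v² s (4+3α_{v,1}) + 2g_x β_{x,1})/√D] + o(φ²)`. -/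
theorem low_frequency_expansion (gx gv : ℝ) (ρx ρv : ℤ → ℝ)
    (hx0 : ρx 0 = 1) (hv0 : ρv 0 = 1)
    (hxsum : ∑ j ∈ Finset.Icc (-2 : ℤ) 2, ρx j = 0)
    (hvsum : ∑ j ∈ Finset.Icc (-2 : ℤ) 2, ρv j = 0)
    (hbx : (ρx 1 - ρx (-1)) + 2 * (ρx 2 - ρx (-2)) = 0)
    (hD : 0 < gv ^ 2 * ((ρv 1 - ρv (-1)) + 2 * (ρv 2 - ρv (-2))) ^ 2
        - 2 * gx * (4 + 3 * (ρx 1 + ρx (-1)))) :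
    let ax1 : ℝ := ρx 1 + ρx (-1)
    let av1 : ℝ := ρv 1 + ρv (-1)
    let bx1 : ℝ := ρx 1 - ρx (-1)
    let s : ℝ := (ρv 1 - ρv (-1)) + 2 * (ρv 2 - ρv (-2))
    let D : ℝ := gv ^ 2 * s ^ 2 - 2 * gx * (4 + 3 * ax1)
    ∃ ε > 0, ∃ νp νm : ℝ → ℂ,
      (∀ φ ∈ Set.Ioo (-ε) ε,
          νp φ ^ 2 - lam gv ρv φ * νp φ - lam gx ρx φ = 0) ∧
      (∀ φ ∈ Set.Ioo (-ε) ε,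
          νm φ ^ 2 - lam gv ρv φ * νm φ - lam gx ρx φ = 0) ∧
      (fun φ : ℝ => νp φ -
          (Complex.I * (φ : ℂ) / 2 * ((gv * s + Real.sqrt D : ℝ) : ℂ) +
            (φ : ℂ) ^ 2 / 4 * ((gv * (4 + 3 * av1) +
              (gv ^ 2 * s * (4 + 3 * av1) + 2 * gx * bx1) / Real.sqrt D : ℝ) : ℂ)))
        =o[nhds (0 : ℝ)] (fun φ : ℝ => φ ^ 2) ∧
      (fun φ : ℝ => νm φ -
          (Complex.I * (φ : ℂ) / 2 * ((gv * s - Real.sqrt D : ℝ) : ℂ) +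
            (φ : ℂ) ^ 2 / 4 * ((gv * (4 + 3 * av1) -
              (gv ^ 2 * s * (4 + 3 * av1) + 2 * gx * bx1) / Real.sqrt D : ℝ) : ℂ)))
        =o[nhds (0 : ℝ)] (fun φ : ℝ => φ ^ 2) := by
  intro ax1 av1 bx1 s D
  obtain ⟨νp, νm, hp, hm, hpo, hmo⟩ := exists_roots_isLittleO (D := D)
    (K := gv ^ 2 * s * (4 + 3 * av1) + 2 * gx * bx1) hD (by ring) (by ring)
    (lam_sub_isLittleO_sq gv hv0 hvsum) (lam_sub_isLittleO_cube gx hx0 hxsum hbx)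
  exact ⟨1, one_pos, νp, νm, fun φ _ => hp φ, fun φ _ => hm φ, hpo, hmo⟩
end

section
/- Let g_v, s, g_x, a be real numbers with D := g_v²·s² − 2·g_x·a ≥ 0, and define the signal velocities c_± = (−g_v·s ± √D)/2. Then (c_− < 0 < c_+ and |c_−| < c_+) holds if and only if (g_v·s < 0 and g_x·a < 0). -/
/-- Corollary 2 of the paper: with signal velocities
`c_± = (−g_v·s ± √D)/2` where `D = g_v²s² − 2g_x·a ≥ 0`, Type I behavior with
attenuation (`c_− < 0 < c_+` and `|c_−| < c_+`) holds if and only if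
`g_v·s < 0` and `g_x·a < 0`. -/
theorem typeI_iff (gv s gx a : ℝ) (hD : 0 ≤ gv ^ 2 * s ^ 2 - 2 * gx * a) :
    let D : ℝ := gv ^ 2 * s ^ 2 - 2 * gx * a
    let cp : ℝ := (-(gv * s) + Real.sqrt D) / 2
    let cm : ℝ := (-(gv * s) - Real.sqrt D) / 2
    (cm < 0 ∧ 0 < cp ∧ |cm| < cp) ↔ (gv * s < 0 ∧ gx * a < 0) := by
  intro D cp cm
  have hr0 : 0 ≤ Real.sqrt D := Real.sqrt_nonneg _
  have hr2 : Real.sqrt D ^ 2 = gv ^ 2 * s ^ 2 - 2 * gx * a := Real.sq_sqrt hD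
  rw [abs_lt]
  constructor
  · rintro ⟨h1, h2, h3, h4⟩
    have ht : gv * s < 0 := by
      simp only [cp, cm] at h3; linarith
    constructor
    · exact ht
    · have hrt : -(gv * s) < Real.sqrt D := by
        simp only [cm] at h1; linarith
      nlinarith
  · rintro ⟨ht, ha⟩
    have hrt : -(gv * s) < Real.sqrt D := by nlinarith
    refine ⟨by simp only [cm]; linarith, by simp only [cp]; linarith,
      by simp only [cp, cm]; linarith, by simp only [cp, cm]; nlinarith⟩
end

section
/- Let g_v, s, g_x, a be real numbers, D := g_v²·s² − 2·g_x·a, and suppose D > 0; define c_± = (−g_v·s ± √D)/2. Then c_− < c_+ < 0 holds if and only if (g_v·s > 0 and g_x·a > 0). -/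
/-- Corollary 4 of the paper: with signal velocities
`c_± = (−g_v·s ± √D)/2` where `D = g_v²s² − 2g_x·a > 0`, both signal
velocities are negative (`c_− < c_+ < 0`, Type III) if and only if
`g_v·s > 0` and `g_x·a > 0`. -/
theorem typeIII_iff (gv s gx a : ℝ) (hD : 0 < gv ^ 2 * s ^ 2 - 2 * gx * a) :
    let D : ℝ := gv ^ 2 * s ^ 2 - 2 * gx * a
    let cp : ℝ := (-(gv * s) + Real.sqrt D) / 2
    let cm : ℝ := (-(gv * s) - Real.sqrt D) / 2
    (cm < cp ∧ cp < 0) ↔ (0 < gv * s ∧ 0 < gx * a) := by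
  intro D cp cm
  have hsq : 0 < Real.sqrt D := Real.sqrt_pos.mpr hD
  have hcm : cm < cp := by unfold cm cp; linarith
  have hsqD : Real.sqrt D ^ 2 = D := Real.sq_sqrt hD.le
  constructor
  · rintro ⟨-, h2⟩
    have h3 : Real.sqrt D < gv * s := by unfold cp at h2; linarith
    have hgvs : 0 < gv * s := lt_of_le_of_lt (Real.sqrt_nonneg D) h3
    refine ⟨hgvs, ?_⟩
    have h4 : D < (gv * s) ^ 2 := by
      calc D = Real.sqrt D ^ 2 := hsqD.symm
        _ < (gv * s) ^ 2 := by nlinarith [Real.sqrt_nonneg D]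
    unfold D at h4
    nlinarith
  · rintro ⟨h1, h2⟩
    refine ⟨hcm, ?_⟩
    have h4 : D < (gv * s) ^ 2 := by unfold D; nlinarith
    have h3 : Real.sqrt D < gv * s := by
      nlinarith [Real.sqrt_nonneg D, hsqD]
    unfold cp; linarith
end

section
/- Let λ_v and λ_x be complex numbers. If every complex root ν of ν² − λ_v·ν − λ_x = 0 has negative real part, then Re(λ_v) < 0 and 2·Re(λ_x) − |λ_v|² < 0. -/
/-!
Write `ν² − λ_v ν − λ_x = (ν − a)(ν − b)`, so that `λ_v = a + b` and `λ_x = −ab` with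
`Re a, Re b < 0`. The first condition is `Re a + Re b < 0`, and the second reads
`|a + b|² + 2 Re(ab) > 0`, where the left side equals
`(Re a + Re b)² + 2 Re a Re b + (Im a)² + (Im b)²`.
-/

open Polynomial

theorem IsAlgClosed.exists_add_eq_and_mul_eq {K : Type*} [Field K] [IsAlgClosed K] (p q : K) :
    ∃ a b : K, a + b = p ∧ a * b = q := by
  obtain ⟨a, ha⟩ := IsAlgClosed.exists_root (X ^ 2 - C p * X + C q) (by
    rw [show degree (X ^ 2 - C p * X + C q) = 2 by compute_degree!]; decide)
  refine ⟨a, p - a, by ring, ?_⟩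
  simp only [IsRoot, eval_add, eval_sub, eval_mul, eval_pow, eval_X, eval_C] at ha
  linear_combination -ha

theorem Complex.norm_add_sq_add_two_mul_mul_re_pos {a b : ℂ} (ha : a.re < 0) (hb : b.re < 0) :
    0 < ‖a + b‖ ^ 2 + 2 * (a * b).re := by
  rw [Complex.sq_norm, Complex.normSq_apply, Complex.mul_re, Complex.add_re, Complex.add_im]
  nlinarith [mul_pos_of_neg_of_neg ha hb, sq_nonneg (a.re + b.re), sq_nonneg a.im, sq_nonneg b.im]

/-- Appendix B of the paper: the two necessary stability conditions obtained
from the Liénard–Chipart criterion. If every root of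
`ν² − λ_v·ν − λ_x = 0` has negative real part, then `Re λ_v < 0` and
`2·Re λ_x − |λ_v|² < 0`. -/
theorem necessary_conditions_of_hurwitz (lv lx : ℂ)
    (h : ∀ ν : ℂ, ν ^ 2 - lv * ν - lx = 0 → ν.re < 0) :
    lv.re < 0 ∧ 2 * lx.re - ‖lv‖ ^ 2 < 0 := by
  obtain ⟨a, b, rfl, hab⟩ := IsAlgClosed.exists_add_eq_and_mul_eq lv (-lx)
  have ha : a.re < 0 := h a (by linear_combination -hab)
  have hb : b.re < 0 := h b (by linear_combination -hab)
  have hlx : lx.re = -(a * b).re := by rw [hab, Complex.neg_re, neg_neg]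
  refine ⟨by simpa using add_neg ha hb, ?_⟩
  linarith [Complex.norm_add_sq_add_two_mul_mul_re_pos ha hb]
end

section
/- Let g_x, g_v be real numbers and ρ_{x,j}, ρ_{v,j} (j = −2,…,2) real coefficients with ρ_{x,0} = ρ_{v,0} = 1, and define λ_x(φ) = g_x·Σ_{j=-2}^{2} ρ_{x,j} e^{iφj} and λ_v(φ) = g_v·Σ_{j=-2}^{2} ρ_{v,j} e^{iφj} for φ ∈ ℝ. If 2·Re(λ_x(φ)) − |λ_v(φ)|² ≤ 0 for all φ ∈ ℝ, then g_x − g_v²·Σ_{j=-2}^{2} ρ_{v,j}² ≤ 0. -/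
/-!
Instead of integrating over `φ ∈ [0, 2π]`, average over the five angles `2πm/5`: since the
frequencies `-2, …, 2` are distinct modulo 5, this discrete average already kills every
non-constant exponential. Hence the average of `Re λ_x` is `g_x` and, by discrete Parseval, the
average of `|λ_v|²` is `g_v² Σ ρ_{v,j}²`. Averaging the hypothesis gives `2 g_x ≤ g_v² Σ ρ_{v,j}²`,
which implies the claim because the right-hand side is nonnegative.
-/

open Complex Finset

noncomputable def trigSum (s : Finset ℤ) (c : ℤ → ℂ) (φ : ℝ) : ℂ :=
  ∑ j ∈ s, c j * exp (I * φ * j)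

lemma lam_eq_ofReal_mul_trigSum (g : ℝ) (ρ : ℤ → ℝ) (φ : ℝ) :
    lam g ρ φ = g * trigSum (Icc (-2) 2) (fun j => ρ j) φ :=
  rfl

lemma ofReal_norm_trigSum_sq (s : Finset ℤ) (c : ℤ → ℂ) (φ : ℝ) :
    (‖trigSum s c φ‖ : ℂ) ^ 2
      = ∑ j ∈ s, ∑ k ∈ s, c j * starRingEnd ℂ (c k) * exp (I * φ * ((j - k : ℤ) : ℂ)) := by
  rw [← mul_conj', trigSum, map_sum, sum_mul_sum]
  refine sum_congr rfl fun j _ => sum_congr rfl fun k _ => ?_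
  rw [map_mul, ← exp_conj, mul_mul_mul_comm, ← exp_add]
  congr 2
  simp only [map_mul, conj_I, conj_ofReal, map_intCast, Int.cast_sub]
  ring

section RootsOfUnity

variable (N : ℕ)

noncomputable def rootAngle (m : ℕ) : ℝ := 2 * Real.pi * m / N

lemma exp_I_mul_rootAngle_mul (m : ℕ) (d : ℤ) :
    exp (I * rootAngle N m * d) = (exp (2 * Real.pi * I / N) ^ d) ^ m := by
  rw [← exp_int_mul, ← exp_nat_mul, rootAngle]
  congr 1
  push_cast
  ring

variable [NeZero N]

lemma sum_exp_I_mul_rootAngle_mul (d : ℤ) :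
    ∑ m ∈ range N, exp (I * rootAngle N m * d) = if (N : ℤ) ∣ d then (N : ℂ) else 0 := by
  have hζ := isPrimitiveRoot_exp N (NeZero.ne N)
  simp_rw [exp_I_mul_rootAngle_mul]
  split_ifs with hd
  · simp [(hζ.zpow_eq_one_iff_dvd d).mpr hd]
  · have hN : (exp (2 * Real.pi * I / N) ^ d) ^ N = 1 := by
      rw [← zpow_natCast, ← zpow_mul, mul_comm d, zpow_mul, zpow_natCast, hζ.pow_eq_one, one_zpow]
    rw [geom_sum_eq (mt (hζ.zpow_eq_one_iff_dvd d).mp hd), hN, sub_self, zero_div]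

variable {N} {s : Finset ℤ}

lemma sum_trigSum_rootAngle (hs : ∀ j ∈ s, ∀ k ∈ s, (N : ℤ) ∣ j - k → j = k) (h0 : 0 ∈ s)
    (c : ℤ → ℂ) :
    ∑ m ∈ range N, trigSum s c (rootAngle N m) = N * c 0 := by
  have hdvd : ∀ j ∈ s, (N : ℤ) ∣ j ↔ j = 0 := fun j hj =>
    ⟨fun hd => hs j hj 0 h0 (by simpa using hd), fun hj0 => hj0 ▸ dvd_zero _⟩
  calc ∑ m ∈ range N, trigSum s c (rootAngle N m)
      = ∑ j ∈ s, c j * ∑ m ∈ range N, exp (I * rootAngle N m * j) := by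
        simp only [trigSum, mul_sum]
        exact sum_comm
    _ = ∑ j ∈ s, if j = 0 then c j * N else 0 := by
        refine sum_congr rfl fun j hj => ?_
        rw [sum_exp_I_mul_rootAngle_mul, if_congr (hdvd j hj) rfl rfl, mul_ite, mul_zero]
    _ = N * c 0 := by rw [sum_ite_eq', if_pos h0, mul_comm]

lemma sum_norm_trigSum_rootAngle_sq (hs : ∀ j ∈ s, ∀ k ∈ s, (N : ℤ) ∣ j - k → j = k)
    (c : ℤ → ℂ) :
    ∑ m ∈ range N, ‖trigSum s c (rootAngle N m)‖ ^ 2 = N * ∑ j ∈ s, ‖c j‖ ^ 2 := by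
  apply Complex.ofReal_injective
  push_cast
  calc ∑ m ∈ range N, (‖trigSum s c (rootAngle N m)‖ : ℂ) ^ 2
      = ∑ j ∈ s, ∑ k ∈ s, c j * starRingEnd ℂ (c k) *
          ∑ m ∈ range N, exp (I * rootAngle N m * ((j - k : ℤ) : ℂ)) := by
        simp only [ofReal_norm_trigSum_sq, mul_sum]
        rw [sum_comm]
        exact sum_congr rfl fun j _ => sum_comm
    _ = ∑ j ∈ s, c j * starRingEnd ℂ (c j) * N := by
        refine sum_congr rfl fun j hj => ?_
        simp_rw [sum_exp_I_mul_rootAngle_mul]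
        rw [sum_eq_single_of_mem j hj]
        · simp
        · intro k hk hkj
          rw [if_neg fun hd => hkj (hs j hj k hk hd).symm, mul_zero]
    _ = N * ∑ j ∈ s, (‖c j‖ : ℂ) ^ 2 := by
        rw [mul_sum]
        exact sum_congr rfl fun j _ => by rw [mul_conj', mul_comm]

end RootsOfUnity

theorem routh_hurwitz_averaged_general (gx gv : ℝ) (ρx ρv : ℤ → ℝ)
    (hx0 : ρx 0 = 1)
    (h : ∀ φ : ℝ, 2 * (lam gx ρx φ).re - ‖lam gv ρv φ‖ ^ 2 ≤ 0) :
    gx - gv ^ 2 * ∑ j ∈ Finset.Icc (-2 : ℤ) 2, (ρv j) ^ 2 ≤ 0 := by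
  have hs : ∀ j ∈ Icc (-2 : ℤ) 2, ∀ k ∈ Icc (-2 : ℤ) 2, ((5 : ℕ) : ℤ) ∣ j - k → j = k := by
    rintro j hj k hk ⟨q, hq⟩
    rw [mem_Icc] at hj hk
    omega
  have hre : ∑ m ∈ range 5, (lam gx ρx (rootAngle 5 m)).re = 5 * gx := by
    rw [← re_sum]
    simp_rw [lam_eq_ofReal_mul_trigSum]
    rw [← mul_sum, sum_trigSum_rootAngle hs (by simp)]
    simp [hx0, mul_comm]
  have hnorm : ∑ m ∈ range 5, ‖lam gv ρv (rootAngle 5 m)‖ ^ 2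
      = 5 * (gv ^ 2 * ∑ j ∈ Icc (-2 : ℤ) 2, ρv j ^ 2) := by
    simp_rw [lam_eq_ofReal_mul_trigSum, norm_mul, mul_pow, ← mul_sum,
      sum_norm_trigSum_rootAngle_sq hs, norm_real, Real.norm_eq_abs, sq_abs]
    push_cast
    ring
  have hsum : ∑ m ∈ range 5,
      (2 * (lam gx ρx (rootAngle 5 m)).re - ‖lam gv ρv (rootAngle 5 m)‖ ^ 2) ≤ 0 :=
    sum_nonpos fun m _ => h _
  rw [sum_sub_distrib, ← mul_sum, hre, hnorm] at hsum
  have : 0 ≤ gv ^ 2 * ∑ j ∈ Icc (-2 : ℤ) 2, ρv j ^ 2 := by positivity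
  linarith

/-- Corollary 5 (Appendix B) of the paper: if the Liénard–Chipart necessary
condition `2Re λ_x(φ) − |λ_v(φ)|² ≤ 0` holds for all `φ`, then
`g_x − g_v²·Σ_{j=-2}^{2} ρ_{v,j}² ≤ 0`. -/
theorem routh_hurwitz_averaged (gx gv : ℝ) (ρx ρv : ℤ → ℝ)
    (hx0 : ρx 0 = 1) (hv0 : ρv 0 = 1)
    (h : ∀ φ : ℝ, 2 * (lam gx ρx φ).re - ‖lam gv ρv φ‖ ^ 2 ≤ 0) :
    gx - gv ^ 2 * ∑ j ∈ Finset.Icc (-2 : ℤ) 2, (ρv j) ^ 2 ≤ 0 :=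
  routh_hurwitz_averaged_general gx gv ρx ρv hx0 h
end
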